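/- arXiv:1605.09587 — 4 statements merged into one kernel-verified Lean document; each statement's English description precedes it below -/
import Mathlib

section
/- Every superorientation of an odd cycle is a minimal M_1-obstruction, where M_1 = [[0,*],[*,0]], and hence M_1 has infinitely many minimal obstructions. -/
/-- A pattern: an `m × m` matrix over `{0,1,*}`; `none` is `*`,
`some false` is `0`, `some true` is `1`. -/
abbrev Pattern (m : ℕ) := Fin m → Fin m → Option Bool

/-- `f` is an `M`-partition of the digraph with arc relation `A`. -/
def IsMPartition {m : ℕ} (M : Pattern m) {V : Type*} (A : V → V → Prop)
    (f : V → Fin m) : Prop :=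
  ∀ u v : V, u ≠ v →
    (M (f u) (f v) = some false → ¬ A u v) ∧
    (M (f u) (f v) = some true → A u v)

/-- The digraph with arc relation `A` admits an `M`-partition. -/
def MPartitionable {m : ℕ} (M : Pattern m) {V : Type*} (A : V → V → Prop) : Prop :=
  ∃ f : V → Fin m, IsMPartition M A f

/-- The induced subdigraph on a set `S` of vertices. -/
def Restrict {V : Type*} (A : V → V → Prop) (S : Set V) : S → S → Prop :=
  fun x y => A x y

/-- A (finite) digraph is a minimal `M`-obstruction if it is not
`M`-partitionable but every proper induced subdigraph is. -/
def IsMinimalObstruction {m : ℕ} (M : Pattern m) {V : Type*} [Finite V]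
    (A : V → V → Prop) : Prop :=
  ¬ MPartitionable M A ∧
    ∀ S : Set V, S ≠ Set.univ → MPartitionable M (Restrict A S)

/-- Isomorphism of digraphs. -/
def DigraphIso {V W : Type*} (A : V → V → Prop) (B : W → W → Prop) : Prop :=
  ∃ e : V ≃ W, ∀ u v : V, A u v ↔ B (e u) (e v)

/-- `B` occurs as an induced subdigraph of `A`. -/
def HasInducedSub {V W : Type*} (A : V → V → Prop) (B : W → W → Prop) : Prop :=
  ∃ g : W → V, Function.Injective g ∧ ∀ u v : W, B u v ↔ A (g u) (g v)

/-- The complement of a digraph. -/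
def DigraphCompl {V : Type*} (A : V → V → Prop) : V → V → Prop :=
  fun x y => x ≠ y ∧ ¬ A x y

/-- The dual (reverse) of a digraph. -/
def Rev {V : Type*} (A : V → V → Prop) : V → V → Prop :=
  fun x y => A y x

/-- The pattern obtained by exchanging `0` and `1` entries. -/
def PatternCompl {m : ℕ} (M : Pattern m) : Pattern m :=
  fun i j => (M i j).map (fun b => !b)

/-- The transpose of a pattern. -/
def PatternTranspose {m : ℕ} (M : Pattern m) : Pattern m :=
  fun i j => M j i

def M1 : Pattern 2 := fun i j => if i = j then some false else none

/-!
An `M1`-partition is exactly a proper 2-colouring of the underlying graph. Along a cycle the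
colours must alternate, so `f k = f 0 ↔ Even k`, and going once around (`k = n`) forces `n` even.
Deleting any vertex `a` leaves a path, which is properly coloured by the parity of `(v - a).val`.
The directed cycles of the odd lengths `2 * N + 3` then give infinitely many minimal obstructions.
-/

theorem ZMod.val_add_one_of_add_one_ne_zero {n : ℕ} [NeZero n] {k : ZMod n} (h : k + 1 ≠ 0) :
    (k + 1).val = k.val + 1 := by
  have hn : n ≠ 1 := by rintro rfl; exact h (Subsingleton.elim _ _)
  have hlt : k.val + 1 < n := by
    refine lt_of_le_of_ne k.val_lt fun hkn => h ?_
    rw [← ZMod.val_eq_zero, ZMod.val_add, ZMod.val_one'' hn, hkn, Nat.mod_self]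
  rw [ZMod.val_add_of_lt (by rwa [ZMod.val_one'' hn]), ZMod.val_one'' hn]

theorem isMPartition_M1_iff {V : Type*} (A : V → V → Prop) (f : V → Fin 2) :
    IsMPartition M1 A f ↔ ∀ u v, u ≠ v → A u v → f u ≠ f v := by
  simp [IsMPartition, M1, imp_not_comm]

theorem even_of_proper_two_coloring_zmod {n : ℕ} (f : ZMod n → Fin 2)
    (hf : ∀ x, f x ≠ f (x + 1)) : Even n := by
  have two_colors : ∀ a b c : Fin 2, a ≠ b → (a = c ↔ b ≠ c) := by decide
  have parity : ∀ k : ℕ, f k = f 0 ↔ Even k := by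
    intro k
    induction k with
    | zero => simp
    | succ k ih =>
      rw [Nat.cast_succ, Nat.even_add_one, ← ih, two_colors _ _ _ (hf k).symm]
  simpa using parity n

theorem not_mPartitionable_M1_of_odd {n : ℕ} (hodd : Odd n) (hn : n ≠ 1)
    (A : ZMod n → ZMod n → Prop) (hcyc : ∀ x : ZMod n, A x (x + 1) ∨ A (x + 1) x) :
    ¬ MPartitionable M1 A := by
  rintro ⟨f, hf⟩
  have : Nontrivial (ZMod n) := ZMod.nontrivial_iff.mpr hn
  rw [isMPartition_M1_iff] at hf
  have hne : ∀ x : ZMod n, x ≠ x + 1 := fun x => by simp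
  refine Nat.not_even_iff_odd.mpr hodd (even_of_proper_two_coloring_zmod f fun x => ?_)
  rcases hcyc x with hA | hA
  · exact hf _ _ (hne x) hA
  · exact (hf _ _ (hne x).symm hA).symm

theorem mPartitionable_M1_restrict_of_notMem {n : ℕ} [NeZero n] (A : ZMod n → ZMod n → Prop)
    (harc : ∀ x y : ZMod n, A x y → y = x + 1 ∨ x = y + 1) {S : Set (ZMod n)} {a : ZMod n}
    (ha : a ∉ S) : MPartitionable M1 (Restrict A S) := by
  have val_succ : ∀ x : ZMod n, x + 1 ∈ S → (x + 1 - a).val = (x - a).val + 1 := by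
    intro x hx
    have hne : x - a + 1 ≠ 0 := by
      rw [← add_sub_right_comm, sub_ne_zero]
      exact fun h => ha (h ▸ hx)
    rw [add_sub_right_comm, ZMod.val_add_one_of_add_one_ne_zero hne]
  refine ⟨fun v => ⟨(v.1 - a).val % 2, Nat.mod_lt _ two_pos⟩, (isMPartition_M1_iff _ _).mpr ?_⟩
  rintro ⟨u, hu⟩ ⟨v, hv⟩ - hA
  simp only [ne_eq, Fin.mk.injEq]
  rcases harc u v hA with rfl | rfl
  · rw [val_succ u hv]; omega
  · rw [val_succ v hu]; omega

theorem isMinimalObstruction_M1_of_odd_cycle {n : ℕ} [NeZero n] (hodd : Odd n) (hn : n ≠ 1)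
    (A : ZMod n → ZMod n → Prop) (harc : ∀ x y : ZMod n, A x y → y = x + 1 ∨ x = y + 1)
    (hcyc : ∀ x : ZMod n, A x (x + 1) ∨ A (x + 1) x) :
    IsMinimalObstruction M1 A := by
  refine ⟨not_mPartitionable_M1_of_odd hodd hn A hcyc, fun S hS => ?_⟩
  obtain ⟨a, ha⟩ := Set.ne_univ_iff_exists_notMem S |>.mp hS
  exact mPartitionable_M1_restrict_of_notMem A harc ha

theorem superorientation_oddCycle_minimal_M1_obstruction
    (n : ℕ) [NeZero n] (hodd : Odd n) (h3 : 3 ≤ n)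
    (A : ZMod n → ZMod n → Prop)
    (harc : ∀ x y : ZMod n, A x y → y = x + 1 ∨ x = y + 1)
    (hcyc : ∀ x : ZMod n, A x (x + 1) ∨ A (x + 1) x) :
    IsMinimalObstruction M1 A ∧
      ∀ N : ℕ, ∃ n' : ℕ, N < n' ∧
        ∃ A' : Fin n' → Fin n' → Prop, IsMinimalObstruction M1 A' := by
  refine ⟨isMinimalObstruction_M1_of_odd_cycle hodd (by omega) A harc hcyc, fun N => ?_⟩
  -- `ZMod (2 * N + 3)` is `Fin (2 * N + 3)` by definition.
  exact ⟨2 * N + 3, by omega, fun x y : ZMod (2 * N + 3) => y = x + 1,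
    isMinimalObstruction_M1_of_odd_cycle ⟨N + 1, by ring⟩ (by omega) _
      (fun _ _ h => Or.inl h) (fun _ => Or.inl rfl)⟩
end

section
/- Every minimal M_2-obstruction, where M_2 = [[0,0],[*,0]], has at most three vertices. -/
def M2 : Pattern 2 := fun i j => if (i : ℕ) = 1 ∧ (j : ℕ) = 0 then none else some false

/-! An `M2`-partition exists exactly when there is no directed path `u → v → w` (with `u = w`
allowed): put the vertices with an out-arc in `V₂`, the others in `V₁`. A minimal obstruction
is therefore spanned by such a path, so it has at most three vertices. -/

/-- `u = w` is allowed, so a digon counts. -/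
def HasTwoPath {V : Type*} (A : V → V → Prop) : Prop :=
  ∃ u v w : V, u ≠ v ∧ v ≠ w ∧ A u v ∧ A v w

lemma M2_ne_some_false_iff {i j : Fin 2} : M2 i j ≠ some false ↔ i = 1 ∧ j = 0 := by
  fin_cases i <;> fin_cases j <;> simp [M2]

lemma M2_ne_some_true (i j : Fin 2) : M2 i j ≠ some true := by
  unfold M2; split <;> simp

lemma IsMPartition.M2_of_adj {V : Type*} {A : V → V → Prop} {f : V → Fin 2}
    (hf : IsMPartition M2 A f) {u v : V} (huv : u ≠ v) (hA : A u v) :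
    f u = 1 ∧ f v = 0 :=
  M2_ne_some_false_iff.mp fun h => (hf u v huv).1 h hA

lemma mPartitionable_M2_iff_not_hasTwoPath {V : Type*} (A : V → V → Prop) :
    MPartitionable M2 A ↔ ¬ HasTwoPath A := by
  classical
  constructor
  · rintro ⟨f, hf⟩ ⟨u, v, w, huv, hvw, hAuv, hAvw⟩
    have hv₀ := (hf.M2_of_adj huv hAuv).2
    have hv₁ := (hf.M2_of_adj hvw hAvw).1
    exact absurd (hv₀.symm.trans hv₁) (by decide)
  · intro hno
    refine ⟨fun x => if ∃ y, x ≠ y ∧ A x y then 1 else 0, fun u v huv => ⟨fun hM hA => ?_,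
      fun hM => absurd hM (M2_ne_some_true _ _)⟩⟩
    have hv : ¬ ∃ y, v ≠ y ∧ A v y := fun ⟨w, hvw, hAvw⟩ => hno ⟨u, v, w, huv, hvw, hA, hAvw⟩
    dsimp only at hM
    rw [if_pos ⟨v, huv, hA⟩, if_neg hv] at hM
    exact M2_ne_some_false_iff.mpr ⟨rfl, rfl⟩ hM

lemma HasTwoPath.restrict {V : Type*} {A : V → V → Prop} {S : Set V} {u v w : V}
    (huv : u ≠ v) (hvw : v ≠ w) (hAuv : A u v) (hAvw : A v w)
    (hu : u ∈ S) (hv : v ∈ S) (hw : w ∈ S) : HasTwoPath (Restrict A S) :=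
  ⟨⟨u, hu⟩, ⟨v, hv⟩, ⟨w, hw⟩, fun h => huv (congrArg Subtype.val h),
    fun h => hvw (congrArg Subtype.val h), hAuv, hAvw⟩

theorem M2_obstruction_small_general {V : Type*} [Finite V] (A : V → V → Prop)
    (h : IsMinimalObstruction M2 A) :
    Nat.card V ≤ 3 := by
  obtain ⟨hno, hmin⟩ := h
  obtain ⟨u, v, w, huv, hvw, hAuv, hAvw⟩ :=
    not_not.mp ((mPartitionable_M2_iff_not_hasTwoPath A).not.mp hno)
  have hspan : Set.range ![u, v, w] = Set.univ := by
    by_contra hS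
    refine (mPartitionable_M2_iff_not_hasTwoPath _).mp (hmin _ hS) ?_
    exact HasTwoPath.restrict huv hvw hAuv hAvw
      (Set.mem_range_self (0 : Fin 3)) (Set.mem_range_self (1 : Fin 3))
      (Set.mem_range_self (2 : Fin 3))
  simpa using Nat.card_le_card_of_surjective _ (Set.range_eq_univ.mp hspan)

theorem M2_obstruction_small {V : Type*} [Finite V] (A : V → V → Prop)
    (hA : Irreflexive A) (h : IsMinimalObstruction M2 A) :
    Nat.card V ≤ 3 :=
  M2_obstruction_small_general A h
end

section
/- A digraph D is M_4-partitionable, where M_4 = [[0,0],[1,0]], that is, D admits a partition (V_1,V_2) into independent sets such that every vertex of V_2 dominates every vertex of V_1, if and only if D is free of the following induced subdigraphs: the digon, the three-vertex tournaments, the digraph consisting of an isolated vertex plus one asymmetric arc, and the induced directed path of length 2. -/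
def M4 : Pattern 2 := fun i j => if (i : ℕ) = 1 ∧ (j : ℕ) = 0 then some true else some false
def Digon : Fin 2 → Fin 2 → Prop := fun x y => x ≠ y
def DirPath2 : Fin 3 → Fin 3 → Prop := fun x y => (x = 0 ∧ y = 1) ∨ (x = 1 ∧ y = 2)
def DirC3 : Fin 3 → Fin 3 → Prop := fun x y => (x = 0 ∧ y = 1) ∨ (x = 1 ∧ y = 2) ∨ (x = 2 ∧ y = 0)
def TransTour3 : Fin 3 → Fin 3 → Prop := fun x y => (x = 0 ∧ y = 1) ∨ (x = 0 ∧ y = 2) ∨ (x = 1 ∧ y = 2)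
def ArcPlusIsolated : Fin 3 → Fin 3 → Prop := fun x y => x = 0 ∧ y = 1

lemma hasSub2 {V : Type*} (A : V → V → Prop) {B : Fin 2 → Fin 2 → Prop}
    {a b : V} (hab : a ≠ b)
    (h : ∀ i j : Fin 2, B i j ↔ A (![a,b] i) (![a,b] j)) : HasInducedSub A B := by
  refine ⟨![a,b], ?_, h⟩
  intro i j hij
  fin_cases i <;> fin_cases j <;> simp_all

lemma hasSub3 {V : Type*} (A : V → V → Prop) {B : Fin 3 → Fin 3 → Prop}
    {a b c : V} (hab : a ≠ b) (hac : a ≠ c) (hbc : b ≠ c)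
    (h : ∀ i j : Fin 3, B i j ↔ A (![a,b,c] i) (![a,b,c] j)) : HasInducedSub A B := by
  refine ⟨![a,b,c], ?_, h⟩
  intro i j hij
  fin_cases i <;> fin_cases j <;> simp_all

section Main
variable {V : Type*} (A : V → V → Prop)

def GoodP (p : V → Bool) : Prop :=
  (∀ u v : V, u ≠ v → p u = p v → ¬ A u v) ∧
  (∀ u v : V, p u = true → p v = false → A u v) ∧
  (∀ u v : V, p u = false → p v = true → ¬ A u v)

lemma second_iff : MPartitionable M4 A ↔ ∃ p : V → Bool, GoodP A p := by
  constructor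
  · rintro ⟨f, hf⟩
    refine ⟨fun v => decide (f v = 1), ?_, ?_, ?_⟩
    · intro u v huv hp
      have hfe : f u = f v := by
        by_cases h1 : f u = 1 <;> by_cases h2 : f v = 1 <;>
          simp [h1, h2] at hp ⊢ <;> omega
      exact (hf u v huv).1 (by simp [M4, hfe]; omega)
    · intro u v hu hv
      have h1 : f u = 1 := of_decide_eq_true hu
      have h2 : f v = 0 := by
        have := of_decide_eq_false hv; omega
      have huv : u ≠ v := by intro h; rw [h, h2] at h1; exact absurd h1 (by decide)
      exact (hf u v huv).2 (by simp [M4, h1, h2])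
    · intro u v hu hv
      have h1 : f u = 0 := by have := of_decide_eq_false hu; omega
      have huv : u ≠ v := by
        intro h; rw [h] at hu; rw [hu] at hv; exact absurd hv (by decide)
      exact (hf u v huv).1 (by simp [M4, h1])
  · rintro ⟨p, h1, h2, h3⟩
    refine ⟨fun v => if p v then 1 else 0, ?_⟩
    intro u v huv
    constructor
    · intro hM
      by_cases hu : p u <;> by_cases hv : p v <;> simp [M4, hu, hv] at hM ⊢
      · exact h1 u v huv (by rw [hu, hv])
      · exact h3 u v (by simp [hu]) (by simp [hv])
      · exact h1 u v huv (by simp [hu, hv])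
    · intro hM
      by_cases hu : p u <;> by_cases hv : p v <;> simp [M4, hu, hv] at hM ⊢
      exact h2 u v (by simp [hu]) (by simp [hv])

variable (hA : Irreflexive A)
include hA

lemma arc_colors {p : V → Bool} (hp : GoodP A p) {u v : V} (h : A u v) :
    p u = true ∧ p v = false := by
  obtain ⟨h1, h2, h3⟩ := hp
  have huv : u ≠ v := by rintro rfl; exact hA u h
  by_cases hu : p u <;> by_cases hv : p v
  · exact absurd h (h1 u v huv (by rw [hu, hv]))
  · exact ⟨hu, by simpa using hv⟩
  · exact absurd h (h3 u v (by simpa using hu) hv)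
  · exact absurd h (h1 u v huv (by simp [hu, hv]))

lemma free_of_goodP {p : V → Bool} (hp : GoodP A p) :
    ¬ HasInducedSub A Digon ∧ ¬ HasInducedSub A DirC3 ∧
      ¬ HasInducedSub A TransTour3 ∧ ¬ HasInducedSub A ArcPlusIsolated ∧
      ¬ HasInducedSub A DirPath2 := by
  obtain ⟨h1, h2, h3⟩ := hp
  refine ⟨?_, ?_, ?_, ?_, ?_⟩
  · rintro ⟨g, hg, hiff⟩
    have hab : A (g 0) (g 1) := (hiff 0 1).1 (by simp [Digon])
    have hba : A (g 1) (g 0) := (hiff 1 0).1 (by simp [Digon])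
    have c1 := arc_colors A hA ⟨h1, h2, h3⟩ hab
    have c2 := arc_colors A hA ⟨h1, h2, h3⟩ hba
    simp [c1.1, c1.2] at c2
  · rintro ⟨g, hg, hiff⟩
    have hab : A (g 0) (g 1) := (hiff 0 1).1 (by simp [DirC3])
    have hbc : A (g 1) (g 2) := (hiff 1 2).1 (by simp [DirC3])
    have c1 := arc_colors A hA ⟨h1, h2, h3⟩ hab
    have c2 := arc_colors A hA ⟨h1, h2, h3⟩ hbc
    simp [c1.2] at c2
  · rintro ⟨g, hg, hiff⟩
    have hab : A (g 0) (g 1) := (hiff 0 1).1 (by simp [TransTour3])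
    have hbc : A (g 1) (g 2) := (hiff 1 2).1 (by simp [TransTour3])
    have c1 := arc_colors A hA ⟨h1, h2, h3⟩ hab
    have c2 := arc_colors A hA ⟨h1, h2, h3⟩ hbc
    simp [c1.2] at c2
  · rintro ⟨g, hg, hiff⟩
    have hab : A (g 0) (g 1) := (hiff 0 1).1 (by simp [ArcPlusIsolated])
    have c1 := arc_colors A hA ⟨h1, h2, h3⟩ hab
    by_cases hc : p (g 2)
    · have : A (g 2) (g 1) := h2 (g 2) (g 1) hc c1.2
      exact absurd ((hiff 2 1).2 this) (by simp [ArcPlusIsolated])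
    · have : A (g 0) (g 2) := h2 (g 0) (g 2) c1.1 (by simpa using hc)
      exact absurd ((hiff 0 2).2 this) (by simp [ArcPlusIsolated])
  · rintro ⟨g, hg, hiff⟩
    have hab : A (g 0) (g 1) := (hiff 0 1).1 (by simp [DirPath2])
    have hbc : A (g 1) (g 2) := (hiff 1 2).1 (by simp [DirPath2])
    have c1 := arc_colors A hA ⟨h1, h2, h3⟩ hab
    have c2 := arc_colors A hA ⟨h1, h2, h3⟩ hbc
    simp [c1.2] at c2

lemma mk_digon {u v : V} (h1 : A u v) (h2 : A v u) : HasInducedSub A Digon := by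
  have hne : u ≠ v := by rintro rfl; exact hA u h1
  exact hasSub2 A hne (by
    intro i j; fin_cases i <;> fin_cases j <;>
      simp [Digon, hA u, hA v] <;> tauto)

lemma goodP_of_free
    (hfree : ¬ HasInducedSub A Digon ∧ ¬ HasInducedSub A DirC3 ∧
      ¬ HasInducedSub A TransTour3 ∧ ¬ HasInducedSub A ArcPlusIsolated ∧
      ¬ HasInducedSub A DirPath2) : ∃ p : V → Bool, GoodP A p := by
  classical
  obtain ⟨hD, hC3, hTT, hAI, hP2⟩ := hfree
  have asym : ∀ u v : V, A u v → ¬ A v u := fun u v huv hvu =>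
    hD (mk_digon A hA huv hvu)
  refine ⟨fun v => decide (∃ w, A v w), ?_, ?_, ?_⟩
  · intro u v huv hp hArc
    simp only [decide_eq_decide] at hp
    obtain ⟨x, hvx⟩ := hp.mp ⟨v, hArc⟩
    by_cases hxu : x = u
    · exact hD (mk_digon A hA hArc (hxu ▸ hvx))
    · have hxv : x ≠ v := fun h => hA v (h ▸ hvx)
      have hvu : ¬ A v u := asym _ _ hArc
      have hxvn : ¬ A x v := asym _ _ hvx
      by_cases hux : A u x
      · by_cases hxu2 : A x u
        · exact hD (mk_digon A hA hux hxu2)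
        · exact hTT (hasSub3 A (B := TransTour3) huv (Ne.symm hxu) (Ne.symm hxv) (by
            intro i j; fin_cases i <;> fin_cases j <;>
              simp [TransTour3, hArc, hvx, hux, hvu, hxvn, hxu2, hA u, hA v, hA x]))
      · by_cases hxu2 : A x u
        · exact hC3 (hasSub3 A (B := DirC3) huv (Ne.symm hxu) (Ne.symm hxv) (by
            intro i j; fin_cases i <;> fin_cases j <;>
              simp [DirC3, hArc, hvx, hux, hvu, hxvn, hxu2, hA u, hA v, hA x]))
        · exact hP2 (hasSub3 A (B := DirPath2) huv (Ne.symm hxu) (Ne.symm hxv) (by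
            intro i j; fin_cases i <;> fin_cases j <;>
              simp [DirPath2, hArc, hvx, hux, hvu, hxvn, hxu2, hA u, hA v, hA x]))
  · intro u v hu hv
    by_contra hnuv
    obtain ⟨w, huw⟩ := of_decide_eq_true hu
    have hvout : ∀ z, ¬ A v z := by
      have := of_decide_eq_false hv
      push_neg at this
      exact this
    have hwu : w ≠ u := fun h => hA u (h ▸ huw)
    have hwv : w ≠ v := fun h => hnuv (h ▸ huw)
    have huvne : u ≠ v := fun h => (by simp [h, hv] at hu)
    by_cases hwu2 : A w u
    · exact hD (mk_digon A hA huw hwu2)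
    · by_cases hwv2 : A w v
      · exact hP2 (hasSub3 A (B := DirPath2) (Ne.symm hwu) huvne hwv (by
          intro i j; fin_cases i <;> fin_cases j <;>
            simp [DirPath2, huw, hwu2, hwv2, hnuv, hvout u, hvout w, hA u, hA v, hA w]))
      · exact hAI (hasSub3 A (B := ArcPlusIsolated) (Ne.symm hwu) huvne hwv (by
          intro i j; fin_cases i <;> fin_cases j <;>
            simp [ArcPlusIsolated, huw, hwu2, hwv2, hnuv, hvout u, hvout w, hA u, hA v, hA w]))
  · intro u v hu hv hArc
    have : ∃ w, A u w := ⟨v, hArc⟩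
    simp [this] at hu

end Main

theorem M4_partitionable_iff_free {V : Type*} [Finite V] (A : V → V → Prop)
    (hA : Irreflexive A) :
    (MPartitionable M4 A ↔
      (¬ HasInducedSub A Digon ∧ ¬ HasInducedSub A DirC3 ∧
        ¬ HasInducedSub A TransTour3 ∧ ¬ HasInducedSub A ArcPlusIsolated ∧
        ¬ HasInducedSub A DirPath2)) ∧
    (MPartitionable M4 A ↔
      ∃ p : V → Bool,
        (∀ u v : V, u ≠ v → p u = p v → ¬ A u v) ∧
        (∀ u v : V, p u = true → p v = false → A u v) ∧
        (∀ u v : V, p u = false → p v = true → ¬ A u v)) := by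
  refine ⟨⟨?_, ?_⟩, second_iff A⟩
  · intro h
    obtain ⟨p, hp⟩ := (second_iff A).mp h
    exact free_of_goodP A hA hp
  · intro h
    exact (second_iff A).mpr (goodP_of_free A hA h)
end

section
/- Let D be a digraph admitting a strict split partition (V_0,V_1) with V_0 independent and V_1 a strong clique, such that D contains no induced subdigraph isomorphic to any superorientation of 2K_2 nor to any 3-vertex minimal M_8-obstruction. Then D admits an M_8-partition, where M_8 = [[0,0],[*,1]]. -/
def M8 : Pattern 2 := fun i j => if (i : ℕ) = 1 then (if (j : ℕ) = 1 then some true else none) else some false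

/-!
Row `0` of `M8` is all zeros, so an `M8`-partition is a strong clique `S` whose complement
consists of sinks. Every digraph on at most two vertices has one, hence every non-partitionable
digraph on three vertices is a minimal obstruction. Excluding these means that two vertices
having out-arcs inside a common triple are joined by an arc.

Let `V₀ = {p = false}` and `V₁ = {p = true}`. If no arc goes from `V₀` to `V₁`, take `S = V₁`.
Otherwise some `x ∈ V₀` has an arc into `V₁`; then `x` sends arcs to all of `V₁`, and no other
vertex of `V₀` has an out-arc. If all of `V₁` sends arcs back to `x`, take `S = V₁ ∪ {x}`;
if `t ∈ V₁` does not, then `t` is a sink, so `V₁ = {t}`, and `S = {x}` works.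
-/

-- A vertex with an out-arc cannot lie in part `0`.
lemma IsMPartition.M8_adj {W : Type*} {A : W → W → Prop} {f : W → Fin 2}
    (hf : IsMPartition M8 A f) {u u' v v' : W} (hu : A u u') (hv : A v v')
    (huu' : u ≠ u') (hvv' : v ≠ v') (huv : u ≠ v) : A u v := by
  have part_one {x y : W} (hxy : x ≠ y) (h : A x y) : f x = 1 := by
    by_contra hx
    exact (hf x y hxy).1 (by simpa [M8, Fin.ext_iff] using hx) h
  exact (hf u v huv).2 (by rw [part_one huu' hu, part_one hvv' hv]; rfl)

lemma mPartitionable_M8_of_clique_of_sinks {W : Type*} {A : W → W → Prop} (S : Set W)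
    (hS : ∀ u ∈ S, ∀ v ∈ S, u ≠ v → A u v) (hsink : ∀ u ∉ S, ∀ v, u ≠ v → ¬ A u v) :
    MPartitionable M8 A := by
  classical
  refine ⟨fun v => if v ∈ S then 1 else 0, fun u v huv => ?_⟩
  by_cases hu : u ∈ S
  · by_cases hv : v ∈ S
    · simp [M8, hu, hv, hS u hu v hv huv]
    · simp [M8, hu, hv]
  · simp [M8, hu, hsink u hu v huv]

lemma mPartitionable_M8_of_forall_three {W : Type*} (B : W → W → Prop)
    (hW : ∀ u v w : W, u = v ∨ u = w ∨ v = w) : MPartitionable M8 B := by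
  by_cases hcomplete : ∀ u v, u ≠ v → B u v
  · exact mPartitionable_M8_of_clique_of_sinks Set.univ (fun u _ v _ => hcomplete u v)
      (fun u hu => absurd trivial hu)
  push Not at hcomplete
  obtain ⟨a, b, hab, hBab⟩ := hcomplete
  refine mPartitionable_M8_of_clique_of_sinks {a}ᶜ (fun u hu v hv huv => ?_) (fun u hu v huv => ?_)
  · exact absurd (hW u v a) (by simp_all)
  · obtain rfl : u = a := by simpa using hu
    obtain rfl : v = b := by have := hW u b v; simp_all
    exact hBab

lemma isMinimalObstruction_M8_of_not_mPartitionable (B : Fin 3 → Fin 3 → Prop)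
    (hB : ¬ MPartitionable M8 B) : IsMinimalObstruction M8 B := by
  refine ⟨hB, fun S hS => mPartitionable_M8_of_forall_three _ fun u v w => ?_⟩
  obtain ⟨i, hi⟩ := (Set.ne_univ_iff_exists_notMem S).1 hS
  have four : ∀ a b c d : Fin 3, a = b ∨ a = c ∨ b = c ∨ a = d ∨ b = d ∨ c = d := by decide
  have hi' (s : S) : (s : Fin 3) ≠ i := fun h => hi (h ▸ s.2)
  simpa [Subtype.ext_iff, hi'] using four u v w i

section ThreeVertex

variable {V : Type*} {A : V → V → Prop}
  (hobs : ∀ B : Fin 3 → Fin 3 → Prop, IsMinimalObstruction M8 B → ¬ HasInducedSub A B)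
include hobs

lemma mPartitionable_M8_triple {u v w : V} (huv : u ≠ v) (huw : u ≠ w) (hvw : v ≠ w) :
    MPartitionable M8 (fun i j : Fin 3 => A (![u, v, w] i) (![u, v, w] j)) := by
  by_contra h
  refine hobs _ (isMinimalObstruction_M8_of_not_mPartitionable _ h) ⟨![u, v, w], ?_, fun _ _ => Iff.rfl⟩
  intro i j
  fin_cases i <;> fin_cases j <;> simp [huv, huw, hvw, huv.symm, huw.symm, hvw.symm]

lemma adj_of_common_out_neighbor {u v w : V} (huv : u ≠ v) (huw : u ≠ w) (hvw : v ≠ w)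
    (hu : A u w) (hv : A v w) : A u v := by
  obtain ⟨f, hf⟩ := mPartitionable_M8_triple hobs huv huw hvw
  exact hf.M8_adj (u := 0) (u' := 2) (v := 1) (v' := 2) hu hv (by decide) (by decide) (by decide)

lemma adj_of_path {u v w : V} (huv : u ≠ v) (huw : u ≠ w) (hvw : v ≠ w)
    (hAvu : A v u) (hAuw : A u w) : A u v := by
  obtain ⟨f, hf⟩ := mPartitionable_M8_triple hobs huv huw hvw
  exact hf.M8_adj (u := 0) (u' := 2) (v := 1) (v' := 0) hAuw hAvu (by decide) (by decide) (by decide)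

end ThreeVertex

section SplitDigraph

variable {V : Type*} {A : V → V → Prop} {p : V → Bool}
  (hind : ∀ u v : V, p u = false → p v = false → u ≠ v → ¬ A u v)
  (hcl : ∀ u v : V, p u = true → p v = true → u ≠ v → A u v ∧ A v u)

include hind hcl in
lemma mPartitionable_M8_of_no_arc_into_clique
    (hno : ∀ u v : V, p u = false → p v = true → ¬ A u v) : MPartitionable M8 A := by
  refine mPartitionable_M8_of_clique_of_sinks {v | p v = true}
    (fun u hu v hv huv => (hcl u v hu hv huv).1) (fun u hu v huv => ?_)
  simp only [Set.mem_ofPred_eq, Bool.not_eq_true] at hu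
  cases hv : p v
  · exact hind u v hu hv huv
  · exact hno u v hu hv

section ArcIntoClique

variable (hobs : ∀ B : Fin 3 → Fin 3 → Prop, IsMinimalObstruction M8 B → ¬ HasInducedSub A B)
  {x t₀ : V} (hx : p x = false) (ht₀ : p t₀ = true) (hxt₀ : A x t₀)
include hobs hx ht₀ hxt₀

include hcl in
lemma adj_of_arc_into_clique {t : V} (ht : p t = true) : A x t := by
  rcases eq_or_ne t t₀ with rfl | htt₀
  · exact hxt₀
  exact adj_of_common_out_neighbor hobs (ne_of_apply_ne p (by simp [hx, ht]))
    (ne_of_apply_ne p (by simp [hx, ht₀])) htt₀ hxt₀ (hcl t t₀ ht ht₀ htt₀).1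

include hind hcl in
lemma not_adj_of_arc_into_clique {u v : V} (hu : p u = false) (hux : u ≠ x) (huv : u ≠ v) :
    ¬ A u v := by
  intro huv'
  cases hv : p v
  · exact hind u v hu hv huv huv'
  · exact hind u x hu hx hux <| adj_of_common_out_neighbor hobs hux
      (ne_of_apply_ne p (by simp [hu, hv])) (ne_of_apply_ne p (by simp [hx, hv])) huv'
      (adj_of_arc_into_clique hcl hobs hx ht₀ hxt₀ hv)

include hind hcl in
lemma mPartitionable_M8_of_arc_into_clique : MPartitionable M8 A := by
  have x_to_clique {t : V} (ht : p t = true) : A x t :=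
    adj_of_arc_into_clique hcl hobs hx ht₀ hxt₀ ht
  have sinks {u v : V} (hu : p u = false) (hux : u ≠ x) (huv : u ≠ v) : ¬ A u v :=
    not_adj_of_arc_into_clique hind hcl hobs hx ht₀ hxt₀ hu hux huv
  by_cases hback : ∀ t, p t = true → A t x
  · refine mPartitionable_M8_of_clique_of_sinks {v | p v = true ∨ v = x}
      (fun u hu v hv huv => ?_) (fun u hu v => sinks (by simp_all) (by simp_all))
    rcases hu with hu | rfl <;> rcases hv with hv | rfl
    · exact (hcl u v hu hv huv).1
    · exact hback u hu
    · exact x_to_clique hv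
    · exact absurd rfl huv
  push Not at hback
  obtain ⟨t, ht, htx⟩ := hback
  have t_sink : ∀ v, t ≠ v → ¬ A t v := by
    intro v htv htv'
    rcases eq_or_ne v x with rfl | hvx
    · exact htx htv'
    · exact htx (adj_of_path hobs (ne_of_apply_ne p (by simp [hx, ht])) htv hvx.symm
        (x_to_clique ht) htv')
  refine mPartitionable_M8_of_clique_of_sinks {x}
    (fun u hu v hv huv => absurd (hu.trans hv.symm) huv) (fun u hu v huv => ?_)
  cases hu' : p u
  · exact sinks hu' hu huv
  · rcases eq_or_ne t u with rfl | htu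
    · exact t_sink v huv
    · exact absurd (hcl t u ht hu' htu).1 (t_sink u htu)

end ArcIntoClique

end SplitDigraph

theorem M8_partitionable_general {V : Type*} (A : V → V → Prop) (p : V → Bool)
    (hind : ∀ u v : V, p u = false → p v = false → u ≠ v → ¬ A u v)
    (hcl : ∀ u v : V, p u = true → p v = true → u ≠ v → A u v ∧ A v u)
    (hobs : ∀ B : Fin 3 → Fin 3 → Prop,
      IsMinimalObstruction M8 B → ¬ HasInducedSub A B) :
    MPartitionable M8 A := by
  by_cases harc : ∃ x t, p x = false ∧ p t = true ∧ A x t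
  · obtain ⟨x, t, hx, ht, hxt⟩ := harc
    exact mPartitionable_M8_of_arc_into_clique hind hcl hobs hx ht hxt
  · push Not at harc
    exact mPartitionable_M8_of_no_arc_into_clique hind hcl harc

theorem M8_partitionable {V : Type*} [Finite V] (A : V → V → Prop)
    (hA : Irreflexive A) (p : V → Bool)
    (hind : ∀ u v : V, p u = false → p v = false → u ≠ v → ¬ A u v)
    (hcl : ∀ u v : V, p u = true → p v = true → u ≠ v → A u v ∧ A v u)
    (h2K2 : ¬ ∃ a b c d : V, a ≠ b ∧ a ≠ c ∧ a ≠ d ∧ b ≠ c ∧ b ≠ d ∧ c ≠ d ∧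
      (A a b ∨ A b a) ∧ (A c d ∨ A d c) ∧
      ¬ A a c ∧ ¬ A c a ∧ ¬ A a d ∧ ¬ A d a ∧
      ¬ A b c ∧ ¬ A c b ∧ ¬ A b d ∧ ¬ A d b)
    (hobs : ∀ B : Fin 3 → Fin 3 → Prop,
      IsMinimalObstruction M8 B → ¬ HasInducedSub A B) :
    MPartitionable M8 A :=
  M8_partitionable_general A p hind hcl hobs
end
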